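/- arXiv:1210.4089 — 3 statements merged into one kernel-verified Lean document; each statement's English description precedes it below -/
import Mathlib

section
/- Let Q_u[z] := z z_uu - (1/2) z_u² - z z_u/u - 2(n-1) z²/u². Then for Z₁(u) = b u⁻²(1-u²)^{1+λ}, one has Q_u[Z₁] = 2b² u⁻⁶ (1-u²)^{2λ} { 4 - n(1-u²)² + 2u²(λ-3) + u⁴(λ-1)² } on (0,1). -/
/-- The quadratic operator `Q_u[z] = z z'' - (1/2)(z')² - z z'/u - 2(n-1) z²/u²`. -/
noncomputable def Qop (n : ℕ) (z : ℝ → ℝ) (u : ℝ) : ℝ :=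
  z u * deriv (deriv z) u - (1 / 2) * (deriv z u) ^ 2 - z u * deriv z u / u
    - 2 * ((n : ℝ) - 1) * (z u) ^ 2 / u ^ 2

/-!
With `v = 1 - u²` and `w = v^λ`, both derivatives of `Z₁` are `w` times a rational function of `u`:
`Z₁' = -2b w (1 + λu²)/u³` and `Z₁'' = 2b w (3 + 3(λ-1)u² + λ(2λ-1)u⁴)/(v u⁴)`.
Every term of `Q_u[Z₁]` is therefore `b² w² / u⁶` times a polynomial in `u`, `λ`, `n`,
and the formula is a polynomial identity.
-/

open Filter Topology Set

theorem Qop_eq_of_hasDerivAt {n : ℕ} {z z' : ℝ → ℝ} {z'' u : ℝ}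
    (hz : ∀ᶠ x in 𝓝 u, HasDerivAt z (z' x) x) (hz' : HasDerivAt z' z'' u) :
    Qop n z u = z u * z'' - (1 / 2) * (z' u) ^ 2 - z u * z' u / u
      - 2 * ((n : ℝ) - 1) * (z u) ^ 2 / u ^ 2 := by
  have hderiv : deriv z =ᶠ[𝓝 u] z' := hz.mono fun x hx => hx.deriv
  rw [Qop, hderiv.deriv_eq, hz'.deriv, hderiv.eq_of_nhds]

theorem hasDerivAt_one_sub_sq_rpow (p : ℝ) {x : ℝ} (hx : x ^ 2 < 1) :
    HasDerivAt (fun x => (1 - x ^ 2) ^ p) (-2 * p * x * (1 - x ^ 2) ^ (p - 1)) x := by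
  convert ((hasDerivAt_pow 2 x).const_sub 1).rpow_const (p := p) (Or.inl (by linarith)) using 1
  ring

section Z1

variable (b lam : ℝ)

noncomputable def Z1 (x : ℝ) : ℝ := b * (1 - x ^ 2) ^ (1 + lam) / x ^ 2

noncomputable def Z1deriv (x : ℝ) : ℝ := -2 * b * (1 - x ^ 2) ^ lam * (1 + lam * x ^ 2) / x ^ 3

variable {b lam}

theorem hasDerivAt_Z1 {x : ℝ} (hx0 : x ≠ 0) (hx : x ^ 2 < 1) :
    HasDerivAt (Z1 b lam) (Z1deriv b lam x) x := by
  have hv : 0 < 1 - x ^ 2 := by linarith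
  refine (((hasDerivAt_one_sub_sq_rpow (1 + lam) hx).const_mul b).div (hasDerivAt_pow 2 x)
    (pow_ne_zero 2 hx0)).congr_deriv ?_
  rw [Z1deriv, add_sub_cancel_left, Real.rpow_add hv, Real.rpow_one]
  field_simp
  ring

theorem hasDerivAt_Z1deriv {x : ℝ} (hx0 : x ≠ 0) (hx : x ^ 2 < 1) :
    HasDerivAt (Z1deriv b lam)
      (2 * b * (1 - x ^ 2) ^ lam * (3 + 3 * (lam - 1) * x ^ 2 + lam * (2 * lam - 1) * x ^ 4)
        / ((1 - x ^ 2) * x ^ 4)) x := by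
  have hv : 0 < 1 - x ^ 2 := by linarith
  have hpoly : HasDerivAt (fun x : ℝ => 1 + lam * x ^ 2) (lam * (2 * x)) x := by
    simpa using ((hasDerivAt_pow 2 x).const_mul lam).const_add 1
  refine ((((hasDerivAt_one_sub_sq_rpow lam hx).const_mul (-2 * b)).mul hpoly).div
    (hasDerivAt_pow 3 x) (pow_ne_zero 3 hx0)).congr_deriv ?_
  rw [Pi.mul_apply, Real.rpow_sub_one hv.ne']
  field_simp
  ring

end Z1

theorem Qop_Z1_formula_general (n : ℕ) (lam b : ℝ) :
    ∀ u ∈ Set.Ioo (0 : ℝ) 1,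
      Qop n (fun u : ℝ => b * (1 - u ^ 2) ^ (1 + lam) / u ^ 2) u
        = 2 * b ^ 2 / u ^ 6 * (1 - u ^ 2) ^ (2 * lam)
            * (4 - n * (1 - u ^ 2) ^ 2 + 2 * u ^ 2 * (lam - 3)
                + u ^ 4 * (lam - 1) ^ 2) := by
  rintro u ⟨hu0, hu1⟩
  have hsq : ∀ x ∈ Ioo (0 : ℝ) 1, x ^ 2 < 1 := fun x hx => by nlinarith [hx.1, hx.2]
  have hv : 0 < 1 - u ^ 2 := by linarith [hsq u ⟨hu0, hu1⟩]
  have hw : (1 - u ^ 2) ^ (2 * lam) = ((1 - u ^ 2) ^ lam) ^ 2 := by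
    rw [mul_comm, ← Real.rpow_mul_natCast hv.le, Nat.cast_ofNat]
  have hZ : ∀ᶠ x in 𝓝 u, HasDerivAt (Z1 b lam) (Z1deriv b lam x) x :=
    eventually_of_mem (isOpen_Ioo.mem_nhds ⟨hu0, hu1⟩) fun x hx =>
      hasDerivAt_Z1 hx.1.ne' (hsq x hx)
  change Qop n (Z1 b lam) u = _
  rw [Qop_eq_of_hasDerivAt hZ (hasDerivAt_Z1deriv hu0.ne' (hsq u ⟨hu0, hu1⟩)),
    Z1, Z1deriv, Real.rpow_add hv, Real.rpow_one, hw]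
  field_simp
  ring

/-- For `Z₁(u) = b u⁻²(1-u²)^{1+λ}` one has
`Q_u[Z₁] = 2b² u⁻⁶ (1-u²)^{2λ} (4 - n(1-u²)² + 2u²(λ-3) + u⁴(λ-1)²)` on `(0,1)`. -/
theorem Qop_Z1_formula (n : ℕ) (hn : 2 ≤ n) (lam b : ℝ) (hlam : 0 < lam) :
    ∀ u ∈ Set.Ioo (0 : ℝ) 1,
      Qop n (fun u : ℝ => b * (1 - u ^ 2) ^ (1 + lam) / u ^ 2) u
        = 2 * b ^ 2 / u ^ 6 * (1 - u ^ 2) ^ (2 * lam)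
            * (4 - n * (1 - u ^ 2) ^ 2 + 2 * u ^ 2 * (lam - 3)
                + u ^ 4 * (lam - 1) ^ 2) :=
  Qop_Z1_formula_general n lam b
end

section
/- The function ζ(u) = u⁻⁴(1-u²)^{2λ} h(u), where h(u) = 1 - 2u² + C₄ u²(1-u²) + 2u²(1-u²)(log(1-u²) - 2 log u), solves the ODE -(1/2)(u⁻¹ - u) ζ'(u) - (u⁻² + 2λ) ζ(u) = u⁻⁶(1-u²)^{2λ} on (0,1), for any constants λ > 0 and C₄ ∈ ℝ. -/
/-!
Write `ζ = (1 - u²)^{2λ} h / u⁴`. The weight `(1 - u²)^{2λ}` is an integrating factor that removes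
`λ` from the operator, and dividing by `u⁴` turns what remains into
`(1 - 2u²) h - ½ u (1 - u²) h' = 1`. Since `u²(1 - u²)` solves the homogeneous equation and
`log(1 - u²) - 2 log u` has derivative `-2 / (u (1 - u²))`, this is a polynomial identity in `u`,
`C₄` and that logarithm.
-/

open Real

noncomputable section

def odeLHS (lam u z z' : ℝ) : ℝ := -(1 / 2) * (u⁻¹ - u) * z' - (u⁻¹ ^ 2 + 2 * lam) * z

def hProfile (C₄ u : ℝ) : ℝ :=
  1 - 2 * u ^ 2 + C₄ * u ^ 2 * (1 - u ^ 2)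
    + 2 * u ^ 2 * (1 - u ^ 2) * (log (1 - u ^ 2) - 2 * log u)

def hProfileDeriv (C₄ u : ℝ) : ℝ :=
  2 * u * (1 - 2 * u ^ 2) * (C₄ + 2 * (log (1 - u ^ 2) - 2 * log u)) - 8 * u

def zetaProfile (lam C₄ u : ℝ) : ℝ := (1 - u ^ 2) ^ (2 * lam) * hProfile C₄ u / u ^ 4

theorem odeLHS_rpow_mul {lam u : ℝ} (hu : u ≠ 0) (hu1 : 1 - u ^ 2 ≠ 0) (z z' : ℝ) :
    odeLHS lam u ((1 - u ^ 2) ^ (2 * lam) * z)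
        (-(2 * u) * (2 * lam) * (1 - u ^ 2) ^ (2 * lam - 1) * z + (1 - u ^ 2) ^ (2 * lam) * z')
      = (1 - u ^ 2) ^ (2 * lam) * odeLHS 0 u z z' := by
  rw [← sub_add_cancel (2 * lam) 1, rpow_add_one hu1, add_sub_cancel_right]
  unfold odeLHS
  field_simp
  ring

theorem odeLHS_zero_div_pow_four {u : ℝ} (hu : u ≠ 0) (h h' : ℝ) :
    odeLHS 0 u (h / u ^ 4) ((h' * u ^ 4 - h * (4 * u ^ 3)) / (u ^ 4) ^ 2)
      = ((1 - 2 * u ^ 2) * h - u * (1 - u ^ 2) / 2 * h') / u ^ 6 := by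
  unfold odeLHS
  field_simp
  ring

theorem hasDerivAt_hProfile (C₄ : ℝ) {u : ℝ} (hu : u ≠ 0) (hu1 : 1 - u ^ 2 ≠ 0) :
    HasDerivAt (hProfile C₄) (hProfileDeriv C₄ u) u := by
  have hsq : HasDerivAt (fun u : ℝ => 1 - u ^ 2) (-(2 * u)) u := by
    simpa using (hasDerivAt_pow 2 u).const_sub 1
  have hlog : HasDerivAt (fun u : ℝ => log (1 - u ^ 2) - 2 * log u)
      (-(2 * u) / (1 - u ^ 2) - 2 * u⁻¹) u :=
    (hsq.log hu1).sub ((hasDerivAt_log hu).const_mul 2)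
  have hpoly := ((hasDerivAt_pow 2 u).const_mul 2).const_sub 1
  have hC := ((hasDerivAt_pow 2 u).const_mul C₄).fun_mul hsq
  have hL := (((hasDerivAt_pow 2 u).const_mul 2).fun_mul hsq).fun_mul hlog
  refine ((hpoly.fun_add hC).fun_add hL).congr_deriv ?_
  unfold hProfileDeriv
  field_simp
  ring

theorem hProfile_reduced_eq_one (C₄ u : ℝ) :
    (1 - 2 * u ^ 2) * hProfile C₄ u - u * (1 - u ^ 2) / 2 * hProfileDeriv C₄ u = 1 := by
  unfold hProfile hProfileDeriv
  ring

theorem hasDerivAt_zetaProfile (lam C₄ : ℝ) {u : ℝ} (hu : u ≠ 0) (hu1 : 1 - u ^ 2 ≠ 0) :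
    HasDerivAt (zetaProfile lam C₄)
      (-(2 * u) * (2 * lam) * (1 - u ^ 2) ^ (2 * lam - 1) * (hProfile C₄ u / u ^ 4)
        + (1 - u ^ 2) ^ (2 * lam)
          * ((hProfileDeriv C₄ u * u ^ 4 - hProfile C₄ u * (4 * u ^ 3)) / (u ^ 4) ^ 2)) u := by
  have hW : HasDerivAt (fun u : ℝ => (1 - u ^ 2) ^ (2 * lam))
      (-(2 * u) * (2 * lam) * (1 - u ^ 2) ^ (2 * lam - 1)) u := by
    refine HasDerivAt.rpow_const ?_ (Or.inl hu1)
    simpa using (hasDerivAt_pow 2 u).const_sub 1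
  have hg := (hasDerivAt_hProfile C₄ hu hu1).fun_div (hasDerivAt_pow 4 u) (pow_ne_zero 4 hu)
  rw [show zetaProfile lam C₄ = fun v => (1 - v ^ 2) ^ (2 * lam) * (hProfile C₄ v / v ^ 4) from
    funext fun v => mul_div_assoc _ _ _]
  exact (hW.fun_mul hg).congr_deriv (by norm_num)

theorem odeLHS_zetaProfile (lam C₄ : ℝ) {u : ℝ} (hu : u ≠ 0) (hu1 : 1 - u ^ 2 ≠ 0) :
    odeLHS lam u (zetaProfile lam C₄ u) (deriv (zetaProfile lam C₄) u)
      = (1 - u ^ 2) ^ (2 * lam) / u ^ 6 := by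
  rw [(hasDerivAt_zetaProfile lam C₄ hu hu1).deriv, zetaProfile, mul_div_assoc,
    odeLHS_rpow_mul hu hu1, odeLHS_zero_div_pow_four hu, hProfile_reduced_eq_one, mul_one_div]

end

theorem zeta_solves_ODE_general (lam C₄ : ℝ) :
    ∀ u ∈ Set.Ioo (0 : ℝ) 1,
      DifferentiableAt ℝ
        (fun u : ℝ => (1 - u ^ 2) ^ (2 * lam)
          * (1 - 2 * u ^ 2 + C₄ * u ^ 2 * (1 - u ^ 2)
              + 2 * u ^ 2 * (1 - u ^ 2) * (Real.log (1 - u ^ 2) - 2 * Real.log u)) / u ^ 4) u ∧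
      -(1 / 2) * (u⁻¹ - u)
          * deriv (fun u : ℝ => (1 - u ^ 2) ^ (2 * lam)
              * (1 - 2 * u ^ 2 + C₄ * u ^ 2 * (1 - u ^ 2)
                  + 2 * u ^ 2 * (1 - u ^ 2) * (Real.log (1 - u ^ 2) - 2 * Real.log u)) / u ^ 4) u
        - (u⁻¹ ^ 2 + 2 * lam)
            * ((1 - u ^ 2) ^ (2 * lam)
                * (1 - 2 * u ^ 2 + C₄ * u ^ 2 * (1 - u ^ 2)
                    + 2 * u ^ 2 * (1 - u ^ 2) * (Real.log (1 - u ^ 2) - 2 * Real.log u)) / u ^ 4)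
        = (1 - u ^ 2) ^ (2 * lam) / u ^ 6 := by
  rintro u ⟨hu0, hu1⟩
  have hu : u ≠ 0 := hu0.ne'
  have hu1 : 1 - u ^ 2 ≠ 0 := by nlinarith
  exact ⟨(hasDerivAt_zetaProfile lam C₄ hu hu1).differentiableAt,
    odeLHS_zetaProfile lam C₄ hu hu1⟩

/-- The profile `ζ(u) = u⁻⁴(1-u²)^{2λ} h(u)` with
`h(u) = 1 - 2u² + C₄ u²(1-u²) + 2u²(1-u²)(log(1-u²) - 2 log u)` solves
`-(1/2)(u⁻¹ - u) ζ' - (u⁻² + 2λ) ζ = u⁻⁶(1-u²)^{2λ}` on `(0,1)`. -/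
theorem zeta_solves_ODE (lam C₄ : ℝ) (hlam : 0 < lam) :
    ∀ u ∈ Set.Ioo (0 : ℝ) 1,
      DifferentiableAt ℝ
        (fun u : ℝ => (1 - u ^ 2) ^ (2 * lam)
          * (1 - 2 * u ^ 2 + C₄ * u ^ 2 * (1 - u ^ 2)
              + 2 * u ^ 2 * (1 - u ^ 2) * (Real.log (1 - u ^ 2) - 2 * Real.log u)) / u ^ 4) u ∧
      -(1 / 2) * (u⁻¹ - u)
          * deriv (fun u : ℝ => (1 - u ^ 2) ^ (2 * lam)
              * (1 - 2 * u ^ 2 + C₄ * u ^ 2 * (1 - u ^ 2)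
                  + 2 * u ^ 2 * (1 - u ^ 2) * (Real.log (1 - u ^ 2) - 2 * Real.log u)) / u ^ 4) u
        - (u⁻¹ ^ 2 + 2 * lam)
            * ((1 - u ^ 2) ^ (2 * lam)
                * (1 - 2 * u ^ 2 + C₄ * u ^ 2 * (1 - u ^ 2)
                    + 2 * u ^ 2 * (1 - u ^ 2) * (Real.log (1 - u ^ 2) - 2 * Real.log u)) / u ^ 4)
        = (1 - u ^ 2) ^ (2 * lam) / u ^ 6 :=
  zeta_solves_ODE_general lam C₄
end

section
/- Let λ ≥ 1, A₂⁺ > A₂⁻ > 0, A₃ > 0, Z₁(u) = u⁻²(1-u²)^{1+λ}, and let ζ : (0,1) → ℝ satisfy ζ(u) = u⁻⁴ + O(u⁻²log(1/u)) as u → 0 and ζ(u) = -(1-u²)^{2λ} + O((1-u²)^{1+2λ}|log(1-u²)|) as u → 1. Then there exists τ₄ such that for all τ ≥ τ₄ and all u ∈ (0,1): e^{-λτ}A₂⁻Z₁(u) - e^{-2λτ}A₃ζ(u) ≤ e^{-λτ}A₂⁺Z₁(u) + e^{-2λτ}A₃ζ(u). -/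
open Filter Asymptotics

set_option maxHeartbeats 1600000 in
/-- Key estimate: `-ζ(u) ≤ C · Z₁(u)` on `(0,1)` for some `C > 0`. -/
lemma neg_zeta_le_const_mul_Z1 (lam : ℝ) (hlam : 1 ≤ lam)
    (ζ : ℝ → ℝ) (hζcont : ContinuousOn ζ (Set.Ioo 0 1))
    (hζ0 : (fun u : ℝ => ζ u - 1 / u ^ 4)
            =O[nhdsWithin 0 (Set.Ioi 0)] (fun u : ℝ => Real.log (1 / u) / u ^ 2))
    (hζ1 : (fun u : ℝ => ζ u + (1 - u ^ 2) ^ (2 * lam))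
            =O[nhdsWithin 1 (Set.Iio 1)]
              (fun u : ℝ => (1 - u ^ 2) ^ (1 + 2 * lam) * |Real.log (1 - u ^ 2)|)) :
    ∃ C > 0, ∀ u ∈ Set.Ioo (0 : ℝ) 1,
      -ζ u ≤ C * ((1 - u ^ 2) ^ (1 + lam) / u ^ 2) := by
  obtain ⟨c0, hc0, h0⟩ := hζ0.exists_nonneg
  rw [isBigOWith_iff, eventually_nhdsWithin_iff, Metric.eventually_nhds_iff] at h0
  obtain ⟨δ, hδ, h0⟩ := h0
  obtain ⟨c1, hc1, h1⟩ := hζ1.exists_nonneg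
  rw [isBigOWith_iff, eventually_nhdsWithin_iff, Metric.eventually_nhds_iff] at h1
  obtain ⟨ε, hε, h1⟩ := h1
  set a : ℝ := min (δ / 2) (min (1 / (2 * (c0 + 1))) (1 / 2)) with ha_def
  set b : ℝ := max (1 - ε / 2) (1 / 2) with hb_def
  have ha0 : 0 < a := by
    have : (0:ℝ) < 1 / (2 * (c0 + 1)) := by positivity
    simp only [ha_def, lt_min_iff]
    exact ⟨by linarith, this, by norm_num⟩
  have ha2 : a ≤ 1 / 2 := le_trans (min_le_right _ _) (min_le_right _ _)
  have hb2 : (1:ℝ) / 2 ≤ b := le_max_right _ _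
  have hb1 : b < 1 := by
    simp only [hb_def, max_lt_iff]
    constructor <;> [linarith; norm_num]
  have hab : a ≤ b := le_trans ha2 hb2
  have hsub : Set.Icc a b ⊆ Set.Ioo (0:ℝ) 1 := fun x hx =>
    ⟨lt_of_lt_of_le ha0 hx.1, lt_of_le_of_lt hx.2 hb1⟩
  obtain ⟨M, hM⟩ := IsCompact.exists_bound_of_continuousOn isCompact_Icc (hζcont.mono hsub)
  set M' : ℝ := max M 0 with hM'_def
  have hM'0 : 0 ≤ M' := le_max_right _ _
  set m : ℝ := (1 - b ^ 2) ^ (1 + lam) with hm_def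
  have hb2pos : 0 < 1 - b ^ 2 := by nlinarith
  have hm0 : 0 < m := Real.rpow_pos_of_pos hb2pos _
  refine ⟨max (1 + c1) (M' / m), lt_of_lt_of_le (by linarith) (le_max_left _ _), ?_⟩
  intro u hu
  obtain ⟨hu0, hu1⟩ := hu
  have hu2 : (0:ℝ) < u ^ 2 := by positivity
  have hs : 0 < 1 - u ^ 2 := by nlinarith
  have hZpos : 0 < (1 - u ^ 2) ^ (1 + lam) / u ^ 2 := by
    exact div_pos (Real.rpow_pos_of_pos hs _) hu2
  have hCmax0 : (0:ℝ) ≤ max (1 + c1) (M' / m) := le_trans (by linarith) (le_max_left _ _)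
  rcases lt_or_ge u a with hua | hua
  · -- near 0: ζ u ≥ 0
    have hud : dist u 0 < δ := by
      rw [Real.dist_eq, sub_zero, abs_of_pos hu0]
      calc u < a := hua
        _ ≤ δ / 2 := min_le_left _ _
        _ < δ := by linarith
    have hb0 := h0 hud (Set.mem_Ioi.mpr hu0)
    rw [Real.norm_eq_abs, Real.norm_eq_abs] at hb0
    have hL0 : 0 ≤ Real.log (1 / u) := by
      apply Real.log_nonneg
      rw [le_div_iff₀ hu0]
      have : u ≤ 1/2 := le_of_lt (lt_of_lt_of_le hua ha2)
      linarith
    have hLle : Real.log (1 / u) ≤ 1 / u := by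
      have := Real.log_le_sub_one_of_pos (show (0:ℝ) < 1 / u by positivity)
      linarith
    have habs : |Real.log (1 / u) / u ^ 2| = Real.log (1 / u) / u ^ 2 := by
      exact abs_of_nonneg (div_nonneg hL0 (le_of_lt hu2))
    rw [habs] at hb0
    have hζge : ζ u ≥ 1 / u ^ 4 - c0 * (Real.log (1 / u) / u ^ 2) := by
      have := abs_le.mp hb0
      linarith [this.1]
    have hcu : c0 * u ≤ 1 / 2 := by
      have hu' : u ≤ 1 / (2 * (c0 + 1)) :=
        le_of_lt (lt_of_lt_of_le hua (le_trans (min_le_right _ _) (min_le_left _ _)))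
      have h2c : (0:ℝ) < 2 * (c0 + 1) := by linarith
      rw [le_div_iff₀ h2c] at hu'
      nlinarith
    have hkey : c0 * (Real.log (1 / u) / u ^ 2) ≤ 1 / u ^ 4 := by
      have h1u : Real.log (1 / u) / u ^ 2 ≤ (1 / u) / u ^ 2 :=
        div_le_div_of_nonneg_right hLle hu2.le
      have : c0 * (Real.log (1 / u) / u ^ 2) ≤ c0 * ((1 / u) / u ^ 2) :=
        mul_le_mul_of_nonneg_left h1u hc0
      have heq : c0 * ((1 / u) / u ^ 2) = (c0 * u) / u ^ 4 := by
        field_simp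
      rw [heq] at this
      refine le_trans this ?_
      apply div_le_div_of_nonneg_right ?_ (by positivity)
      · linarith
    have : 0 ≤ ζ u := by linarith
    nlinarith [mul_pos (lt_of_lt_of_le (by linarith : (0:ℝ) < 1 + c1) (le_max_left (1+c1) (M'/m))) hZpos]
  rcases lt_or_ge b u with hub | hub
  · -- near 1
    have hud : dist u 1 < ε := by
      rw [Real.dist_eq, abs_of_neg (by linarith : u - 1 < 0)]
      have : 1 - ε / 2 ≤ b := le_max_left _ _
      linarith
    have hb1' := h1 hud (Set.mem_Iio.mpr hu1)
    rw [Real.norm_eq_abs, Real.norm_eq_abs] at hb1'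
    set s : ℝ := 1 - u ^ 2 with hs_def
    have hs1 : s < 1 := by rw [hs_def]; nlinarith
    have hsple : (0:ℝ) < s ^ (1 + 2 * lam) := Real.rpow_pos_of_pos hs _
    have habs : abs (s ^ (1 + 2 * lam) * |Real.log s|) = s ^ (1 + 2 * lam) * |Real.log s| :=
      abs_of_nonneg (mul_nonneg (le_of_lt hsple) (abs_nonneg _))
    rw [habs] at hb1'
    have hmain : -ζ u ≤ s ^ (2 * lam) + c1 * (s ^ (1 + 2 * lam) * |Real.log s|) := by
      have := abs_le.mp hb1'
      linarith [this.1]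
    -- s^(2λ) ≤ s^(1+λ)
    have h1le : s ^ (2 * lam) ≤ s ^ (1 + lam) :=
      Real.rpow_le_rpow_of_exponent_ge hs (le_of_lt hs1) (by linarith)
    -- s^(1+2λ) = s^(1+λ) * s^λ
    have hsplit : s ^ (1 + 2 * lam) = s ^ (1 + lam) * s ^ lam := by
      rw [← Real.rpow_add hs]; ring_nf
    -- s^λ * |log s| ≤ 1
    have hlogneg : Real.log s < 0 := Real.log_neg hs hs1
    have habslog : |Real.log s| = -Real.log s := abs_of_neg hlogneg
    have hslam : s ^ lam ≤ s := by
      have := Real.rpow_le_rpow_of_exponent_ge hs (le_of_lt hs1) hlam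
      rwa [Real.rpow_one] at this
    have hsmul : s * (-Real.log s) ≤ 1 := by
      have hinv := Real.log_le_sub_one_of_pos (show (0:ℝ) < s⁻¹ by positivity)
      rw [Real.log_inv] at hinv
      have : s * (-Real.log s) ≤ s * (s⁻¹ - 1) :=
        mul_le_mul_of_nonneg_left hinv (le_of_lt hs)
      have hss : s * (s⁻¹ - 1) = 1 - s := by field_simp
      rw [hss] at this; linarith
    have hprod : s ^ lam * |Real.log s| ≤ 1 := by
      rw [habslog]
      calc s ^ lam * (-Real.log s) ≤ s * (-Real.log s) :=
            mul_le_mul_of_nonneg_right hslam (by linarith)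
        _ ≤ 1 := hsmul
    have h2le : s ^ (1 + 2 * lam) * |Real.log s| ≤ s ^ (1 + lam) := by
      rw [hsplit, mul_assoc]
      calc s ^ (1 + lam) * (s ^ lam * |Real.log s|) ≤ s ^ (1 + lam) * 1 :=
            mul_le_mul_of_nonneg_left hprod (le_of_lt (Real.rpow_pos_of_pos hs _))
        _ = s ^ (1 + lam) := mul_one _
    have hle1 : -ζ u ≤ (1 + c1) * s ^ (1 + lam) := by
      have := mul_le_mul_of_nonneg_left h2le hc1
      nlinarith
    have hZ : s ^ (1 + lam) ≤ s ^ (1 + lam) / u ^ 2 := by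
      rw [le_div_iff₀ hu2]
      have : u ^ 2 ≤ 1 := by nlinarith
      nlinarith [Real.rpow_pos_of_pos hs (1 + lam)]
    calc -ζ u ≤ (1 + c1) * s ^ (1 + lam) := hle1
      _ ≤ max (1 + c1) (M' / m) * (s ^ (1 + lam) / u ^ 2) := by
          apply mul_le_mul (le_max_left _ _) hZ
            (le_of_lt (Real.rpow_pos_of_pos hs _)) hCmax0
  · -- middle: a ≤ u ≤ b
    have huIcc : u ∈ Set.Icc a b := ⟨hua, hub⟩
    have hMu := hM u huIcc
    rw [Real.norm_eq_abs] at hMu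
    have hζb : -ζ u ≤ M' := le_trans (neg_le_abs _) (le_trans hMu (le_max_left _ _))
    have hZm : m ≤ (1 - u ^ 2) ^ (1 + lam) / u ^ 2 := by
      have h1 : (1 - b ^ 2) ≤ (1 - u ^ 2) := by nlinarith
      have h2 : m ≤ (1 - u ^ 2) ^ (1 + lam) :=
        Real.rpow_le_rpow (le_of_lt hb2pos) h1 (by linarith)
      refine le_trans h2 ?_
      rw [le_div_iff₀ hu2]
      have : u ^ 2 ≤ 1 := by nlinarith
      nlinarith [Real.rpow_pos_of_pos hs (1 + lam)]
    calc -ζ u ≤ M' := hζb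
      _ = (M' / m) * m := by field_simp
      _ ≤ max (1 + c1) (M' / m) * ((1 - u ^ 2) ^ (1 + lam) / u ^ 2) := by
          apply mul_le_mul (le_max_right _ _) hZm (le_of_lt hm0) hCmax0

set_option maxHeartbeats 1600000 in
/-- Ordering of the exterior barriers: with `Z₁(u) = u⁻²(1-u²)^{1+λ}` (`λ ≥ 1`),
`A₂⁺ > A₂⁻ > 0`, `A₃ > 0`, and `ζ` continuous on `(0,1)` with
`ζ(u) = u⁻⁴ + O(u⁻²log(1/u))` at `0` and `ζ(u) = -(1-u²)^{2λ} + O((1-u²)^{1+2λ}|log(1-u²)|)`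
at `1`, there exists `τ₄` such that for all `τ ≥ τ₄` and `u ∈ (0,1)`,
`e^{-λτ}A₂⁻Z₁(u) - e^{-2λτ}A₃ζ(u) ≤ e^{-λτ}A₂⁺Z₁(u) + e^{-2λτ}A₃ζ(u)`. -/
theorem exterior_barriers_ordered (lam : ℝ) (hlam : 1 ≤ lam)
    (A₂p A₂m A₃ : ℝ) (hA₂m : 0 < A₂m) (hA₂ : A₂m < A₂p) (hA₃ : 0 < A₃)
    (ζ : ℝ → ℝ) (hζcont : ContinuousOn ζ (Set.Ioo 0 1))
    (hζ0 : (fun u : ℝ => ζ u - 1 / u ^ 4)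
            =O[nhdsWithin 0 (Set.Ioi 0)] (fun u : ℝ => Real.log (1 / u) / u ^ 2))
    (hζ1 : (fun u : ℝ => ζ u + (1 - u ^ 2) ^ (2 * lam))
            =O[nhdsWithin 1 (Set.Iio 1)]
              (fun u : ℝ => (1 - u ^ 2) ^ (1 + 2 * lam) * |Real.log (1 - u ^ 2)|)) :
    ∃ τ₄ : ℝ, ∀ τ ≥ τ₄, ∀ u ∈ Set.Ioo (0 : ℝ) 1,
      Real.exp (-lam * τ) * A₂m * ((1 - u ^ 2) ^ (1 + lam) / u ^ 2)
          - Real.exp (-2 * lam * τ) * A₃ * ζ u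
        ≤ Real.exp (-lam * τ) * A₂p * ((1 - u ^ 2) ^ (1 + lam) / u ^ 2)
            + Real.exp (-2 * lam * τ) * A₃ * ζ u := by
  obtain ⟨C, hC, hbound⟩ := neg_zeta_le_const_mul_Z1 lam hlam ζ hζcont hζ0 hζ1
  have hlam0 : (0:ℝ) < lam := by linarith
  refine ⟨Real.log (2 * A₃ * C / (A₂p - A₂m)) / lam, ?_⟩
  intro τ hτ u hu
  obtain ⟨hu0, hu1⟩ := hu
  have hu2 : (0:ℝ) < u ^ 2 := by positivity
  have hs : 0 < 1 - u ^ 2 := by nlinarith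
  set Z : ℝ := (1 - u ^ 2) ^ (1 + lam) / u ^ 2 with hZ_def
  have hZpos : 0 < Z := div_pos (Real.rpow_pos_of_pos hs _) hu2
  set E : ℝ := Real.exp (-lam * τ) with hE_def
  have hEpos : 0 < E := Real.exp_pos _
  have hE2 : Real.exp (-2 * lam * τ) = E * E := by
    rw [hE_def, ← Real.exp_add]; ring_nf
  have hquot : (0:ℝ) < 2 * A₃ * C / (A₂p - A₂m) := by
    apply div_pos (by positivity) (by linarith)
  have hEle : E ≤ (A₂p - A₂m) / (2 * A₃ * C) := by
    have h1 : -lam * τ ≤ -Real.log (2 * A₃ * C / (A₂p - A₂m)) := by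
      rw [ge_iff_le, div_le_iff₀ hlam0] at hτ
      nlinarith
    calc E ≤ Real.exp (-Real.log (2 * A₃ * C / (A₂p - A₂m))) := Real.exp_le_exp.mpr h1
      _ = (A₂p - A₂m) / (2 * A₃ * C) := by
          rw [Real.exp_neg, Real.exp_log hquot, inv_div]
  have hzb := hbound u ⟨hu0, hu1⟩
  -- 2 * E * A₃ * C ≤ A₂p - A₂m
  have hkey : 2 * E * A₃ * C ≤ A₂p - A₂m := by
    rw [le_div_iff₀ (by positivity : (0:ℝ) < 2 * A₃ * C)] at hEle
    linarith
  rw [hE2]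
  have hfin : E * E * A₃ * (-ζ u) ≤ E * E * A₃ * (C * Z) :=
    mul_le_mul_of_nonneg_left hzb (by positivity)
  nlinarith [mul_le_mul_of_nonneg_right hkey (le_of_lt (mul_pos hEpos hZpos)),
    mul_pos hEpos hZpos]
end
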